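/- Let G be a compact group and let Λ be a family of pairwise inequivalent irreps of G that is randomly Sidon with constant C. Then for every finitely supported family (b_π)_{π∈Λ}, where b_π : G → M_{d_π}(ℂ) is continuous, one has |Σ_{π∈Λ} d_π · tr(∫_G π(g) b_π(g) dm_G(g))| ≤ C · ∫_𝒢 sup_{t∈G} |Σ_{π∈Λ} d_π · tr(u_π b_π(t))| dm_𝒢(u). -/

import Mathlib

open MeasureTheory Matrix
open scoped ComplexOrder ENNReal

noncomputable section

instance matrixMeasurable {m n : Type*} : MeasurableSpace (Matrix m n ℂ) :=
  inferInstanceAs (MeasurableSpace (m → n → ℂ))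

/-- A (finite-dimensional, continuous, unitary) irreducible representation of a
topological group `G`. -/
structure Irrep (G : Type) [Group G] [TopologicalSpace G] where
  d : ℕ
  toFun : G →* Matrix.unitaryGroup (Fin d) ℂ
  continuous_toFun : Continuous fun g => ((toFun g : Matrix (Fin d) (Fin d) ℂ))
  irreducible : ∀ V : Submodule ℂ (Fin d → ℂ),
    (∀ (g : G), ∀ v ∈ V, Matrix.mulVec ((toFun g : Matrix (Fin d) (Fin d) ℂ)) v ∈ V) →
    V = ⊥ ∨ V = ⊤

namespace Irrep

variable {G : Type} [Group G] [TopologicalSpace G]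

/-- The matrix realization of an irrep. -/
def mat (ρ : Irrep G) (g : G) : Matrix (Fin ρ.d) (Fin ρ.d) ℂ :=
  (ρ.toFun g : Matrix (Fin ρ.d) (Fin ρ.d) ℂ)

lemma continuous_mat (ρ : Irrep G) : Continuous ρ.mat := ρ.continuous_toFun

/-- Unitary equivalence of the irrep `ρ` with a matrix-valued function `F`
(e.g. the matrix realization of another representation). -/
def EquivMat (ρ : Irrep G) {m : ℕ} (F : G → Matrix (Fin m) (Fin m) ℂ) : Prop :=
  ∃ (h : ρ.d = m) (U : Matrix (Fin m) (Fin m) ℂ),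
    U ∈ Matrix.unitaryGroup (Fin m) ℂ ∧
    ∀ g : G, U * (Matrix.reindex (finCongr h) (finCongr h) (ρ.mat g)) = F g * U

/-- Unitary equivalence of two irreps. -/
def Equiv (ρ₁ ρ₂ : Irrep G) : Prop := ρ₁.EquivMat ρ₂.mat

/-- `ρ` is nontrivial if it is not constantly the identity. -/
def IsNontrivial (ρ : Irrep G) : Prop := ∃ g, ρ.toFun g ≠ 1

end Irrep

/-- A family of pairwise inequivalent irreps. -/
def PairwiseInequiv {G : Type} [Group G] [TopologicalSpace G] {ι : Type}
    (π : ι → Irrep G) : Prop :=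
  ∀ i j, i ≠ j → ¬ (π i).Equiv (π j)

/-- A family of irreps is symmetric if the (entrywise) conjugate of each member is
equivalent to a member of the family. -/
def SymmetricFamily {G : Type} [Group G] [TopologicalSpace G] {ι : Type}
    (π : ι → Irrep G) : Prop :=
  ∀ i, ∃ j, (π j).EquivMat (fun g => ((π i).mat g).map (starRingEnd ℂ))

/-- The operator norm (on `ℓ₂`) of a complex matrix. -/
def opNorm {d : ℕ} (A : Matrix (Fin d) (Fin d) ℂ) : ℝ :=
  ‖LinearMap.toContinuousLinearMap (Matrix.toEuclideanLin A)‖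

/-- `tr|a|`, the trace of `(a* a)^{1/2}`, i.e. the sum of the singular values of `a`. -/
def traceAbs {d : ℕ} (A : Matrix (Fin d) (Fin d) ℂ) : ℝ :=
  (((Matrix.posSemidef_conjTranspose_mul_self A).isHermitian.eigenvectorUnitary.1 *
      Matrix.diagonal (fun i => ((Real.sqrt
        ((Matrix.posSemidef_conjTranspose_mul_self A).isHermitian.eigenvalues i) : ℝ) : ℂ)) *
      (star (Matrix.posSemidef_conjTranspose_mul_self A).isHermitian.eigenvectorUnitary :
        Matrix (Fin d) (Fin d) ℂ)).trace).re

/-- The Fourier coefficient `μ̂(ρ) = ∫ conj (ρ(t)) dμ(t)` of a (positive) measure `μ`. -/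
def fourierP {G : Type} [Group G] [TopologicalSpace G] [MeasurableSpace G]
    (μ : Measure G) (ρ : Irrep G) : Matrix (Fin ρ.d) (Fin ρ.d) ℂ :=
  Matrix.of fun i j => ∫ g, star (ρ.mat g i j) ∂μ

/-- The Fourier coefficient `μ̂(ρ)` of a complex Radon measure on a compact group,
the latter being encoded (via the Riesz representation theorem) as a continuous linear
functional on `C(G, ℂ)`; its total variation norm is then the norm of the functional. -/
def fourierL {G : Type} [Group G] [TopologicalSpace G] [CompactSpace G]
    (μ : C(G, ℂ) →L[ℂ] ℂ) (ρ : Irrep G) : Matrix (Fin ρ.d) (Fin ρ.d) ℂ :=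
  Matrix.of fun i j =>
    μ ⟨fun g => star (ρ.mat g i j), continuous_star.comp (ρ.continuous_mat.matrix_elem i j)⟩

/-- The family `Λ = (π i)` is Sidon with constant `C`. -/
def Sidon {G : Type} [Group G] [TopologicalSpace G] {ι : Type}
    (π : ι → Irrep G) (C : ℝ) : Prop :=
  ∀ (s : Finset ι) (a : ∀ i, Matrix (Fin ((π i).d)) (Fin ((π i).d)) ℂ),
    ∑ i ∈ s, ((π i).d : ℝ) * traceAbs (a i) ≤
      C * ⨆ g : G, ‖∑ i ∈ s, ((π i).d : ℂ) * Matrix.trace ((π i).mat g * a i)‖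

/-- The family `Λ = (π i)` is randomly Sidon with constant `C`, with respect to the
Haar probability measure `m𝒢` on `𝒢 = ∏ U(d_i)`. -/
def RandomlySidonWith {G : Type} [Group G] [TopologicalSpace G] {ι : Type}
    (π : ι → Irrep G) (C : ℝ)
    (m𝒢 : Measure (∀ i, Matrix.unitaryGroup (Fin ((π i).d)) ℂ)) : Prop :=
  ∀ (s : Finset ι) (a : ∀ i, Matrix (Fin ((π i).d)) (Fin ((π i).d)) ℂ),
    ∑ i ∈ s, ((π i).d : ℝ) * traceAbs (a i) ≤
      C * ∫ u, (⨆ g : G,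
        ‖∑ i ∈ s, ((π i).d : ℂ) *
          Matrix.trace ((u i : Matrix (Fin ((π i).d)) (Fin ((π i).d)) ℂ) *
            (π i).mat g * a i)‖) ∂m𝒢


/-! ### Auxiliary material for the proof -/

instance matrixBorel {m n : Type*} [Countable m] [Countable n] : BorelSpace (Matrix m n ℂ) :=
  inferInstanceAs (BorelSpace (m → n → ℂ))

instance matrixSC {m n : Type*} [Countable m] [Countable n] :
    SecondCountableTopology (Matrix m n ℂ) :=
  inferInstanceAs (SecondCountableTopology (m → n → ℂ))

lemma trace_mul_expand {d : ℕ} (M N : Matrix (Fin d) (Fin d) ℂ) :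
    (M * N).trace = ∑ p, ∑ q, M p q * N q p := by
  simp [Matrix.trace, Matrix.mul_apply, Matrix.diag]

lemma col_sq_sum {d : ℕ} (N : Matrix (Fin d) (Fin d) ℂ) (i : Fin d) :
    ∑ p, ‖N p i‖ ^ 2 = ((star N * N) i i).re := by
  rw [Matrix.mul_apply, Complex.re_sum]
  refine Finset.sum_congr rfl fun p _ => ?_
  have : (star N) i p = (starRingEnd ℂ) (N p i) := by
    simp [Matrix.star_eq_conjTranspose, Matrix.conjTranspose_apply]
  rw [this]
  rw [mul_comm, Complex.mul_conj]
  simp [Complex.normSq_eq_norm_sq, ← Complex.ofReal_pow]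

lemma norm_trace_le_traceAbs {d : ℕ} (A : Matrix (Fin d) (Fin d) ℂ) :
    ‖A.trace‖ ≤ traceAbs A := by
  classical
  set hH := Matrix.posSemidef_conjTranspose_mul_self A with hHdef
  set V : Matrix (Fin d) (Fin d) ℂ := (hH.isHermitian.eigenvectorUnitary : Matrix (Fin d) (Fin d) ℂ)
    with hVdef
  set σ : Fin d → ℝ := fun i => Real.sqrt (hH.isHermitian.eigenvalues i) with hσdef
  set S := V * Matrix.diagonal (RCLike.ofReal ∘ σ) * star V with hSdef
  have hσ0 : ∀ i, 0 ≤ σ i := fun i => Real.sqrt_nonneg _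
  have hV1 : star V * V = 1 := Unitary.star_mul_self_of_mem (hH.isHermitian.eigenvectorUnitary).2
  have hV2 : V * star V = 1 := Unitary.mul_star_self_of_mem (hH.isHermitian.eigenvectorUnitary).2
  have hdiag : star V * S * V = Matrix.diagonal (RCLike.ofReal ∘ σ) := by
    rw [hSdef]
    simp only [← mul_assoc]
    rw [hV1, one_mul, mul_assoc, hV1, mul_one]
  have htrS : S.trace = ∑ i, (σ i : ℂ) := by
    have h1 : (star V * S * V).trace = S.trace := by
      rw [Matrix.trace_mul_cycle, hV2, one_mul]
    rw [← h1, hdiag, Matrix.trace_diagonal]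
    simp
  have hTA : traceAbs A = ∑ i, σ i := by
    show (S.trace).re = _
    rw [htrS, Complex.re_sum]
    simp
  have key : ∀ i, ‖(star V * A * V) i i‖ ≤ σ i := by
    intro i
    set x : EuclideanSpace ℂ (Fin d) := WithLp.toLp 2 (fun p => V p i) with hxdef
    set y : EuclideanSpace ℂ (Fin d) := WithLp.toLp 2 (fun p => (A * V) p i) with hydef
    have hinner : (inner ℂ x y : ℂ) = (star V * A * V) i i := by
      rw [mul_assoc, Matrix.mul_apply]
      rw [PiLp.inner_apply]
      refine Finset.sum_congr rfl fun p _ => ?_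
      simp [hxdef, hydef, RCLike.inner_apply, Matrix.star_eq_conjTranspose,
        Matrix.conjTranspose_apply, mul_comm]
    have hx : ‖x‖ = 1 := by
      rw [EuclideanSpace.norm_eq]
      have : ∑ p, ‖V p i‖ ^ 2 = 1 := by
        rw [col_sq_sum, hV1]
        simp [Matrix.one_apply]
      simp only [hxdef]
      rw [this, Real.sqrt_one]
    have hAV : star (A * V) * (A * V) = Matrix.diagonal (RCLike.ofReal ∘ σ) *
        Matrix.diagonal (RCLike.ofReal ∘ σ) := by
      have h2 : Aᴴ * A = S * S := by
        have hsp := hH.isHermitian.spectral_theorem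
        simp only [Unitary.conjStarAlgAut_apply, Unitary.coe_star] at hsp
        have hDD : (Matrix.diagonal (RCLike.ofReal ∘ σ) * Matrix.diagonal (RCLike.ofReal ∘ σ) :
            Matrix (Fin d) (Fin d) ℂ) =
            Matrix.diagonal (RCLike.ofReal ∘ hH.isHermitian.eigenvalues) := by
          rw [Matrix.diagonal_mul_diagonal]
          congr 1
          funext j
          simp only [Function.comp, hσdef]
          rw [← RCLike.ofReal_mul, Real.mul_self_sqrt (hH.eigenvalues_nonneg j)]
        calc Aᴴ * A = V * Matrix.diagonal (RCLike.ofReal ∘ hH.isHermitian.eigenvalues) * star V :=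
              hsp
          _ = V * (Matrix.diagonal (RCLike.ofReal ∘ σ) * Matrix.diagonal (RCLike.ofReal ∘ σ)) *
              star V := by rw [hDD]
          _ = V * Matrix.diagonal (RCLike.ofReal ∘ σ) * (star V * V) *
              Matrix.diagonal (RCLike.ofReal ∘ σ) * star V := by rw [hV1]; noncomm_ring
          _ = S * S := by rw [hSdef]; noncomm_ring
      calc star (A * V) * (A * V) = star V * (Aᴴ * A) * V := by
            rw [StarMul.star_mul]
            simp only [Matrix.star_eq_conjTranspose]
            noncomm_ring
        _ = star V * S * (V * star V) * (S * V) := by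
            rw [h2, hV2]
            noncomm_ring
        _ = (star V * S * V) * (star V * S * V) := by noncomm_ring
        _ = _ := by rw [hdiag]
    have hy : ‖y‖ = σ i := by
      rw [EuclideanSpace.norm_eq]
      have h3 : ∑ p, ‖(A * V) p i‖ ^ 2 = σ i ^ 2 := by
        rw [col_sq_sum, hAV, Matrix.diagonal_mul_diagonal, Matrix.diagonal_apply_eq]
        simp [← Complex.ofReal_mul, sq]
      simp only [hydef]
      rw [h3, Real.sqrt_sq (hσ0 i)]
    calc ‖(star V * A * V) i i‖ = ‖(inner ℂ x y : ℂ)‖ := by rw [hinner]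
      _ ≤ ‖x‖ * ‖y‖ := norm_inner_le_norm x y
      _ = σ i := by rw [hx, hy, one_mul]
  have htrA : A.trace = (star V * A * V).trace := by
    rw [Matrix.trace_mul_cycle, hV2, one_mul]
  rw [htrA, hTA]
  have htr : (star V * A * V).trace = ∑ i, (star V * A * V) i i := by
    simp [Matrix.trace, Matrix.diag]
  rw [htr]
  exact (norm_sum_le _ _).trans (Finset.sum_le_sum fun i _ => key i)

lemma unitary_entry_norm_le {d : ℕ} (u : Matrix.unitaryGroup (Fin d) ℂ) (p q : Fin d) :
    ‖(u : Matrix (Fin d) (Fin d) ℂ) p q‖ ≤ 1 := by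
  have h1 : star (u : Matrix (Fin d) (Fin d) ℂ) * (u : Matrix (Fin d) (Fin d) ℂ) = 1 :=
    Unitary.star_mul_self_of_mem u.2
  have h2 : ∑ p', ‖(u : Matrix (Fin d) (Fin d) ℂ) p' q‖ ^ 2 = 1 := by
    rw [col_sq_sum, h1]
    simp [Matrix.one_apply]
  have h3 : ‖(u : Matrix (Fin d) (Fin d) ℂ) p q‖ ^ 2 ≤ 1 := by
    rw [← h2]
    exact Finset.single_le_sum (f := fun p' => ‖(u : Matrix (Fin d) (Fin d) ℂ) p' q‖ ^ 2)
      (fun _ _ => sq_nonneg _) (Finset.mem_univ p)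
  nlinarith [norm_nonneg ((u : Matrix (Fin d) (Fin d) ℂ) p q)]

lemma Measurable.matrix_mul'' {X : Type*} [MeasurableSpace X] {d : ℕ}
    {f g : X → Matrix (Fin d) (Fin d) ℂ} (hf : Measurable f) (hg : Measurable g) :
    Measurable fun x => f x * g x := by
  refine measurable_pi_lambda _ fun p => measurable_pi_lambda _ fun q => ?_
  simp only [Matrix.mul_apply]
  refine Finset.measurable_sum _ fun r _ => Measurable.mul ?_ ?_
  · exact (measurable_pi_apply r).comp ((measurable_pi_apply p).comp hf)
  · exact (measurable_pi_apply q).comp ((measurable_pi_apply r).comp hg)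

lemma Measurable.matrix_star'' {X : Type*} [MeasurableSpace X] {d : ℕ}
    {f : X → Matrix (Fin d) (Fin d) ℂ} (hf : Measurable f) :
    Measurable fun x => star (f x) := by
  refine measurable_pi_lambda _ fun p => measurable_pi_lambda _ fun q => ?_
  have : (fun x => (star (f x)) p q) = fun x => (starRingEnd ℂ) (f x q p) := by
    funext x; simp [Matrix.star_eq_conjTranspose, Matrix.conjTranspose_apply]
  rw [this]
  exact Complex.continuous_conj.measurable.comp
    ((measurable_pi_apply p).comp ((measurable_pi_apply q).comp hf))

/-- Right invariance of a left-invariant probability measure, for a given function. -/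
lemma integral_right_translate_eq {Γ : Type*} [Group Γ] [MeasurableSpace Γ]
    [MeasurableMul Γ] (μ : Measure Γ) [IsProbabilityMeasure μ] [μ.IsMulLeftInvariant]
    (f : Γ → ℝ) (c : Γ)
    (h1 : Integrable (fun p : Γ × Γ => f (p.1⁻¹ * p.2)) (μ.prod μ))
    (h2 : Integrable (fun p : Γ × Γ => f (p.1⁻¹ * p.2 * c)) (μ.prod μ)) :
    ∫ u, f (u * c) ∂μ = ∫ u, f u ∂μ := by
  have inv_shift : ∀ (F : Γ → ℝ) (v : Γ), ∫ u, F (u⁻¹ * v) ∂μ = ∫ u, F u⁻¹ ∂μ := by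
    intro F v
    have h := integral_mul_left_eq_self (μ := μ) (fun u => F (u⁻¹ * v)) v
    simp only [_root_.mul_inv_rev, mul_assoc, inv_mul_cancel, mul_one] at h
    exact h.symm
  have main : ∀ (F : Γ → ℝ), Integrable (fun p : Γ × Γ => F (p.1⁻¹ * p.2)) (μ.prod μ) →
      ∫ u, F u ∂μ = ∫ u, F u⁻¹ ∂μ := by
    intro F hF
    have swap := integral_integral_swap (f := fun u v => F (u⁻¹ * v)) hF
    have eq1 : ∫ (u : Γ), ∫ (v : Γ), F (u⁻¹ * v) ∂μ ∂μ = ∫ v, F v ∂μ := by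
      have h' : ∀ u : Γ, ∫ (v : Γ), F (u⁻¹ * v) ∂μ = ∫ v, F v ∂μ := fun u =>
        integral_mul_left_eq_self F u⁻¹
      simp only [h']
      simp
    have eq2 : ∫ (v : Γ), ∫ (u : Γ), F (u⁻¹ * v) ∂μ ∂μ = ∫ u, F u⁻¹ ∂μ := by
      have h' : ∀ v : Γ, ∫ (u : Γ), F (u⁻¹ * v) ∂μ = ∫ u, F u⁻¹ ∂μ := fun v => inv_shift F v
      simp only [h']
      simp
    rw [← eq1, swap, eq2]
  calc ∫ u, f (u * c) ∂μ = ∫ u, (fun x => f (x * c)) u⁻¹ ∂μ := main _ h2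
    _ = ∫ u, f (u⁻¹ * c) ∂μ := by simp
    _ = ∫ u, f u⁻¹ ∂μ := inv_shift f c
    _ = ∫ u, f u ∂μ := (main f h1).symm

namespace RSAux

variable {G : Type} [Group G] [TopologicalSpace G]
variable {ι : Type} (π : ι → Irrep G) (s : Finset ι)
variable (b : ∀ i, G → Matrix (Fin ((π i).d)) (Fin ((π i).d)) ℂ)

/-- Finite product of matrix spaces indexed by `s`. -/
abbrev E := ∀ i : {x // x ∈ s}, Matrix (Fin ((π i.1).d)) (Fin ((π i.1).d)) ℂ

variable [CompactSpace G] (hb : ∀ i, Continuous (b i))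

/-- Elementary continuous functions used as building blocks. -/
def kappa (i : {x // x ∈ s}) (p q : Fin ((π i.1).d)) : C(G, ℂ) :=
  ⟨fun t => ((π i.1).d : ℂ) * b i.1 t q p, continuous_const.mul ((hb i.1).matrix_elem q p)⟩

/-- The linear map sending a family of matrices to the corresponding "random trace sum"
continuous function. -/
def T (a : E π s) : C(G, ℂ) :=
  ∑ i : {x // x ∈ s}, ∑ p, ∑ q, a i p q • kappa π s b hb i p q

lemma T_cont : Continuous (T π s b hb) := by
  refine continuous_finset_sum _ fun i _ => continuous_finset_sum _ fun p _ =>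
    continuous_finset_sum _ fun q _ => ?_
  have hc : Continuous fun a : E π s => a i := continuous_apply i
  exact (hc.matrix_elem p q).smul
    continuous_const

lemma T_apply (a : E π s) (t : G) :
    T π s b hb a t = ∑ i : {x // x ∈ s}, ((π i.1).d : ℂ) * ((a i) * (b i.1 t)).trace := by
  simp only [T, ContinuousMap.coe_sum, Finset.sum_apply, ContinuousMap.coe_smul, Pi.smul_apply,
    smul_eq_mul, kappa, ContinuousMap.coe_mk]
  refine Finset.sum_congr rfl fun i _ => ?_
  rw [trace_mul_expand, Finset.mul_sum]
  refine Finset.sum_congr rfl fun p _ => ?_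
  rw [Finset.mul_sum]
  refine Finset.sum_congr rfl fun q _ => ?_
  ring

/-- A uniform bound for `T` on matrices with entries of norm at most one. -/
def Kb : ℝ := ∑ i : {x // x ∈ s}, ∑ p, ∑ q, ‖kappa π s b hb i p q‖

lemma T_norm_le (a : E π s) (ha : ∀ i p q, ‖a i p q‖ ≤ 1) :
    ‖T π s b hb a‖ ≤ Kb π s b hb := by
  refine (norm_sum_le _ _).trans (Finset.sum_le_sum fun i _ => ?_)
  refine (norm_sum_le _ _).trans (Finset.sum_le_sum fun p _ => ?_)
  refine (norm_sum_le _ _).trans (Finset.sum_le_sum fun q _ => ?_)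
  rw [norm_smul]
  calc ‖a i p q‖ * ‖kappa π s b hb i p q‖ ≤ 1 * ‖kappa π s b hb i p q‖ :=
        mul_le_mul_of_nonneg_right (ha i p q) (norm_nonneg _)
    _ = _ := one_mul _

/-- The function `u ↦ sup_t |∑ dᵢ tr(uᵢ bᵢ(t))|` on the product of unitary groups. -/
def Phi (u : ∀ i, Matrix.unitaryGroup (Fin ((π i).d)) ℂ) : ℝ :=
  ‖T π s b hb (fun i => (u i.1 : Matrix (Fin ((π i.1).d)) (Fin ((π i.1).d)) ℂ))‖

lemma Phi_nonneg (u : ∀ i, Matrix.unitaryGroup (Fin ((π i).d)) ℂ) :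
    0 ≤ Phi π s b hb u := norm_nonneg _

lemma Phi_le (u : ∀ i, Matrix.unitaryGroup (Fin ((π i).d)) ℂ) :
    Phi π s b hb u ≤ Kb π s b hb :=
  T_norm_le π s b hb _ (fun i p q => unitary_entry_norm_le _ _ _)

lemma Phi_eq (u : ∀ i, Matrix.unitaryGroup (Fin ((π i).d)) ℂ) :
    Phi π s b hb u = ⨆ t : G, ‖∑ i ∈ s, ((π i).d : ℂ) *
      Matrix.trace ((u i : Matrix (Fin ((π i).d)) (Fin ((π i).d)) ℂ) * b i t)‖ := by
  rw [Phi, ContinuousMap.norm_eq_iSup_norm]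
  congr 1
  funext t
  rw [T_apply]
  congr 1
  exact Finset.sum_coe_sort s
    (fun i => ((π i).d : ℂ) * Matrix.trace ((u i : Matrix (Fin ((π i).d)) (Fin ((π i).d)) ℂ) * b i t))

lemma measurable_phi_comp {X : Type*} [MeasurableSpace X]
    {w : X → ∀ i, Matrix.unitaryGroup (Fin ((π i).d)) ℂ} (hw : Measurable w) :
    Measurable fun x => Phi π s b hb (w x) := by
  have h1 : Measurable fun x => (fun i : {x // x ∈ s} =>
      ((w x i.1 : Matrix (Fin ((π i.1).d)) (Fin ((π i.1).d)) ℂ))) :=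
    measurable_pi_lambda _ fun i =>
      measurable_subtype_coe.comp ((measurable_pi_apply i.1).comp hw)
  exact ((T_cont π s b hb).norm.measurable).comp h1

lemma integrable_phi_comp {X : Type*} [MeasurableSpace X] (μX : Measure X) [IsFiniteMeasure μX]
    {w : X → ∀ i, Matrix.unitaryGroup (Fin ((π i).d)) ℂ} (hw : Measurable w) :
    Integrable (fun x => Phi π s b hb (w x)) μX := by
  refine Integrable.mono' (integrable_const (Kb π s b hb))
    (measurable_phi_comp π s b hb hw).aestronglyMeasurable (ae_of_all _ fun x => ?_)
  rw [Real.norm_eq_abs, abs_of_nonneg (Phi_nonneg π s b hb _)]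
  exact Phi_le π s b hb _

end RSAux

set_option maxHeartbeats 2000000 in
set_option synthInstance.maxHeartbeats 1000000 in
/-- If `Λ = (π i)` is randomly Sidon with constant `C`, then for every finitely supported
family of continuous matrix-valued functions `b_π : G → M_{d_π}(ℂ)` one has
`|Σ d_π tr ∫ π(g) b_π(g) dm_G| ≤ C ∫_𝒢 sup_t |Σ d_π tr(u_π b_π(t))| dm_𝒢(u)`. -/
theorem randomly_sidon_functional_form
    (G : Type) [Group G] [TopologicalSpace G] [IsTopologicalGroup G] [CompactSpace G]
    [T2Space G] [MeasurableSpace G] [BorelSpace G]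
    (ι : Type) (π : ι → Irrep G) (hpair : PairwiseInequiv π) (C : ℝ)
    (mG : Measure G) (hmG : mG.IsHaarMeasure) (hmG1 : IsProbabilityMeasure mG)
    (m𝒢 : Measure (∀ i, Matrix.unitaryGroup (Fin ((π i).d)) ℂ))
    (hm𝒢 : m𝒢.IsHaarMeasure) (hm𝒢1 : IsProbabilityMeasure m𝒢)
    (hRS : RandomlySidonWith π C m𝒢)
    (s : Finset ι) (b : ∀ i, G → Matrix (Fin ((π i).d)) (Fin ((π i).d)) ℂ)
    (hb : ∀ i, Continuous (b i)) :
    ‖∑ i ∈ s, ((π i).d : ℂ) * ∫ g, Matrix.trace ((π i).mat g * b i g) ∂mG‖ ≤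
      C * ∫ u, (⨆ t : G, ‖∑ i ∈ s, ((π i).d : ℂ) *
        Matrix.trace ((u i : Matrix (Fin ((π i).d)) (Fin ((π i).d)) ℂ) * b i t)‖) ∂m𝒢 := by
  classical
  haveI : Nonempty G := ⟨1⟩
  haveI := hmG.toIsMulLeftInvariant
  haveI := hm𝒢.toIsMulLeftInvariant
  haveI : SFinite mG := inferInstance
  haveI : SFinite m𝒢 := inferInstance
  haveI : IsFiniteMeasure (m𝒢.prod mG) := inferInstance
  haveI : IsFiniteMeasure (m𝒢.prod m𝒢) := inferInstance
  -- measurability of multiplication and inversion on the product of unitary groups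
  have hmulG : ∀ {X : Type} [MeasurableSpace X]
      (f g : X → ∀ i, Matrix.unitaryGroup (Fin ((π i).d)) ℂ),
      Measurable f → Measurable g → Measurable fun x => f x * g x := by
    intro X _ f g hf hg
    refine measurable_pi_lambda _ fun i => ?_
    have h1 : Measurable fun x => ((f x i : Matrix (Fin ((π i).d)) (Fin ((π i).d)) ℂ)) :=
      measurable_subtype_coe.comp ((measurable_pi_apply i).comp hf)
    have h2 : Measurable fun x => ((g x i : Matrix (Fin ((π i).d)) (Fin ((π i).d)) ℂ)) :=
      measurable_subtype_coe.comp ((measurable_pi_apply i).comp hg)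
    exact Measurable.subtype_mk (h1.matrix_mul'' h2)
  have hinvG : ∀ {X : Type} [MeasurableSpace X]
      (f : X → ∀ i, Matrix.unitaryGroup (Fin ((π i).d)) ℂ),
      Measurable f → Measurable fun x => (f x)⁻¹ := by
    intro X _ f hf
    refine measurable_pi_lambda _ fun i => ?_
    have h1 : Measurable fun x => ((f x i : Matrix (Fin ((π i).d)) (Fin ((π i).d)) ℂ)) :=
      measurable_subtype_coe.comp ((measurable_pi_apply i).comp hf)
    exact Measurable.subtype_mk h1.matrix_star''
  haveI : MeasurableMul (∀ i, Matrix.unitaryGroup (Fin ((π i).d)) ℂ) :=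
    ⟨fun c => hmulG _ _ measurable_const measurable_id,
     fun c => hmulG _ _ measurable_id measurable_const⟩
  -- integrability of continuous functions on the compact group G
  have contIntC : ∀ f : G → ℂ, Continuous f → Integrable f mG := by
    intro f hf
    have h1 : IntegrableOn f Set.univ mG := hf.continuousOn.integrableOn_compact isCompact_univ
    rwa [IntegrableOn, Measure.restrict_univ] at h1
  have contIntR : ∀ f : G → ℝ, Continuous f → Integrable f mG := by
    intro f hf
    have h1 : IntegrableOn f Set.univ mG := hf.continuousOn.integrableOn_compact isCompact_univ
    rwa [IntegrableOn, Measure.restrict_univ] at h1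
  by_cases hC : 0 ≤ C
  · -- main case
    set Afun : ∀ i, Matrix (Fin ((π i).d)) (Fin ((π i).d)) ℂ :=
      fun i => Matrix.of fun p q => ∫ g, ((π i).mat g * b i g) p q ∂mG with hAfun
    have traceA : ∀ (i : ι) (M : Matrix (Fin ((π i).d)) (Fin ((π i).d)) ℂ),
        (M * Afun i).trace = ∫ g, (M * ((π i).mat g * b i g)).trace ∂mG := by
      intro i M
      simp only [trace_mul_expand]
      have hint : ∀ p q : Fin ((π i).d), Integrable (fun g => ((π i).mat g * b i g) q p) mG :=
        fun p q => contIntC _ (((π i).continuous_mat.matrix_mul (hb i)).matrix_elem q p)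
      rw [integral_finset_sum _ (fun p _ => integrable_finset_sum _
        (fun q _ => (hint p q).const_mul (M p q)))]
      refine Finset.sum_congr rfl fun p _ => ?_
      rw [integral_finset_sum _ (fun q _ => (hint p q).const_mul (M p q))]
      refine Finset.sum_congr rfl fun q _ => ?_
      exact (integral_const_mul _ _).symm
    set cfun : G → (∀ i, Matrix.unitaryGroup (Fin ((π i).d)) ℂ) :=
      fun h i => (π i).toFun h with hcfun
    have hcfun_meas : Measurable cfun := measurable_pi_lambda _ fun i =>
      Measurable.subtype_mk ((π i).continuous_mat.measurable)
    have hPhiMul : ∀ (u : ∀ i, Matrix.unitaryGroup (Fin ((π i).d)) ℂ) (x : G),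
        RSAux.Phi π s b hb (u * cfun x) = ‖RSAux.T π s b hb
          (fun i : {y // y ∈ s} =>
            ((u i.1 : Matrix (Fin ((π i.1).d)) (Fin ((π i.1).d)) ℂ) * (π i.1).mat x))‖ := by
      intro u x
      rfl
    have hw1 : Measurable fun p : (∀ i, Matrix.unitaryGroup (Fin ((π i).d)) ℂ) × G =>
        p.1 * cfun p.2 := hmulG _ _ measurable_fst (hcfun_meas.comp measurable_snd)
    have hΘint : Integrable (fun p : (∀ i, Matrix.unitaryGroup (Fin ((π i).d)) ℂ) × G =>
        RSAux.Phi π s b hb (p.1 * cfun p.2)) (m𝒢.prod mG) :=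
      RSAux.integrable_phi_comp π s b hb _ hw1
    have hψint : Integrable (fun u => ∫ h, RSAux.Phi π s b hb (u * cfun h) ∂mG) m𝒢 :=
      hΘint.integral_prod_left
    have key : ∀ (u : ∀ i, Matrix.unitaryGroup (Fin ((π i).d)) ℂ),
        (⨆ g : G, ‖∑ i ∈ s, ((π i).d : ℂ) * Matrix.trace
          ((u i : Matrix (Fin ((π i).d)) (Fin ((π i).d)) ℂ) * (π i).mat g * Afun i)‖)
        ≤ ∫ h, RSAux.Phi π s b hb (u * cfun h) ∂mG := by
      intro u
      refine ciSup_le fun g => ?_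
      have hmatmul : ∀ (i : ι) (h : G), (π i).mat (g * h) = (π i).mat g * (π i).mat h := by
        intro i h; simp [Irrep.mat, _root_.map_mul]
      have hFconti : ∀ i : ι, Continuous (fun h : G => ((π i).d : ℂ) *
          (((u i : Matrix (Fin ((π i).d)) (Fin ((π i).d)) ℂ) * (π i).mat (g * h)) * b i h).trace) :=
        fun i => continuous_const.mul (((continuous_const.matrix_mul
          ((π i).continuous_mat.comp (continuous_mul_left g))).matrix_mul (hb i)).matrix_trace)
      have hFcont : Continuous (fun h : G => ∑ i ∈ s, ((π i).d : ℂ) *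
          (((u i : Matrix (Fin ((π i).d)) (Fin ((π i).d)) ℂ) * (π i).mat (g * h)) * b i h).trace) :=
        continuous_finset_sum _ fun i _ => hFconti i
      have step1 : (∑ i ∈ s, ((π i).d : ℂ) * Matrix.trace
            ((u i : Matrix (Fin ((π i).d)) (Fin ((π i).d)) ℂ) * (π i).mat g * Afun i))
          = ∫ h, (∑ i ∈ s, ((π i).d : ℂ) *
              (((u i : Matrix (Fin ((π i).d)) (Fin ((π i).d)) ℂ) * (π i).mat (g * h)) * b i h).trace) ∂mG := by
        rw [integral_finset_sum _ (fun i _ => contIntC _ (hFconti i))]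
        refine Finset.sum_congr rfl fun i _ => ?_
        rw [traceA i ((u i : Matrix (Fin ((π i).d)) (Fin ((π i).d)) ℂ) * (π i).mat g)]
        rw [← integral_const_mul]
        congr 1
        funext h
        congr 1
        rw [hmatmul]
        simp only [mul_assoc]
      rw [step1]
      have hpt : ∀ h : G, ‖∑ i ∈ s, ((π i).d : ℂ) *
          (((u i : Matrix (Fin ((π i).d)) (Fin ((π i).d)) ℂ) * (π i).mat (g * h)) * b i h).trace‖
          ≤ RSAux.Phi π s b hb (u * cfun (g * h)) := by
        intro h
        rw [hPhiMul]
        have heq : (∑ i ∈ s, ((π i).d : ℂ) *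
            (((u i : Matrix (Fin ((π i).d)) (Fin ((π i).d)) ℂ) * (π i).mat (g * h)) * b i h).trace)
            = RSAux.T π s b hb (fun i : {y // y ∈ s} =>
              ((u i.1 : Matrix (Fin ((π i.1).d)) (Fin ((π i.1).d)) ℂ) * (π i.1).mat (g * h))) h := by
          rw [RSAux.T_apply]
          exact (Finset.sum_coe_sort s fun i => ((π i).d : ℂ) *
            (((u i : Matrix (Fin ((π i).d)) (Fin ((π i).d)) ℂ) * (π i).mat (g * h)) * b i h).trace).symm
        rw [heq]
        exact ContinuousMap.norm_coe_le_norm _ h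
      have hmajcont : Continuous fun h : G => RSAux.Phi π s b hb (u * cfun (g * h)) := by
        have heq2 : (fun h : G => RSAux.Phi π s b hb (u * cfun (g * h))) = fun h : G =>
            ‖RSAux.T π s b hb (fun i : {y // y ∈ s} =>
              ((u i.1 : Matrix (Fin ((π i.1).d)) (Fin ((π i.1).d)) ℂ) * (π i.1).mat (g * h)))‖ :=
          funext fun h => hPhiMul u (g * h)
        rw [heq2]
        refine Continuous.norm ((RSAux.T_cont π s b hb).comp ?_)
        exact continuous_pi fun i => continuous_const.matrix_mul
          ((π i.1).continuous_mat.comp (continuous_mul_left g))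
      calc ‖∫ h, (∑ i ∈ s, ((π i).d : ℂ) *
            (((u i : Matrix (Fin ((π i).d)) (Fin ((π i).d)) ℂ) * (π i).mat (g * h)) * b i h).trace) ∂mG‖
          ≤ ∫ h, ‖∑ i ∈ s, ((π i).d : ℂ) *
            (((u i : Matrix (Fin ((π i).d)) (Fin ((π i).d)) ℂ) * (π i).mat (g * h)) * b i h).trace‖ ∂mG :=
            norm_integral_le_integral_norm _
        _ ≤ ∫ h, RSAux.Phi π s b hb (u * cfun (g * h)) ∂mG :=
            integral_mono (contIntR _ hFcont.norm) (contIntR _ hmajcont) hpt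
        _ = ∫ h, RSAux.Phi π s b hb (u * cfun h) ∂mG :=
            integral_mul_left_eq_self (fun h => RSAux.Phi π s b hb (u * cfun h)) g
    have hI1 : (∫ u, (⨆ g : G, ‖∑ i ∈ s, ((π i).d : ℂ) * Matrix.trace
          ((u i : Matrix (Fin ((π i).d)) (Fin ((π i).d)) ℂ) * (π i).mat g * Afun i)‖) ∂m𝒢)
        ≤ ∫ u, RSAux.Phi π s b hb u ∂m𝒢 := by
      have hmono := integral_mono_of_nonneg
        (ae_of_all _ fun u => Real.iSup_nonneg fun g => norm_nonneg _) hψint (ae_of_all _ key)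
      refine hmono.trans (le_of_eq ?_)
      calc (∫ u, ∫ h, RSAux.Phi π s b hb (u * cfun h) ∂mG ∂m𝒢)
          = ∫ h, ∫ u, RSAux.Phi π s b hb (u * cfun h) ∂m𝒢 ∂mG :=
            integral_integral_swap hΘint
        _ = ∫ h, ∫ u, RSAux.Phi π s b hb u ∂m𝒢 ∂mG := by
            congr 1
            funext h
            refine integral_right_translate_eq m𝒢 _ (cfun h) ?_ ?_
            · exact RSAux.integrable_phi_comp π s b hb _
                (hmulG _ _ (hinvG _ measurable_fst) measurable_snd)
            · exact RSAux.integrable_phi_comp π s b hb _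
                (hmulG _ _ (hmulG _ _ (hinvG _ measurable_fst) measurable_snd) measurable_const)
        _ = ∫ u, RSAux.Phi π s b hb u ∂m𝒢 := by simp
    have LHSeq : ∀ i : ι, (∫ g, Matrix.trace ((π i).mat g * b i g) ∂mG) = (Afun i).trace := by
      intro i
      have h1 := traceA i 1
      simp only [one_mul] at h1
      exact h1.symm
    calc ‖∑ i ∈ s, ((π i).d : ℂ) * ∫ g, Matrix.trace ((π i).mat g * b i g) ∂mG‖
        = ‖∑ i ∈ s, ((π i).d : ℂ) * (Afun i).trace‖ := by
          congr 1
          exact Finset.sum_congr rfl fun i _ => by rw [LHSeq i]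
      _ ≤ ∑ i ∈ s, ((π i).d : ℝ) * traceAbs (Afun i) := by
          refine (norm_sum_le _ _).trans (Finset.sum_le_sum fun i _ => ?_)
          rw [norm_mul, Complex.norm_natCast]
          exact mul_le_mul_of_nonneg_left (norm_trace_le_traceAbs _) (Nat.cast_nonneg _)
      _ ≤ C * ∫ u, (⨆ g : G, ‖∑ i ∈ s, ((π i).d : ℂ) * Matrix.trace
            ((u i : Matrix (Fin ((π i).d)) (Fin ((π i).d)) ℂ) * (π i).mat g * Afun i)‖) ∂m𝒢 :=
          hRS s Afun
      _ ≤ C * ∫ u, RSAux.Phi π s b hb u ∂m𝒢 := mul_le_mul_of_nonneg_left hI1 hC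
      _ = C * ∫ u, (⨆ t : G, ‖∑ i ∈ s, ((π i).d : ℂ) * Matrix.trace
            ((u i : Matrix (Fin ((π i).d)) (Fin ((π i).d)) ℂ) * b i t)‖) ∂m𝒢 := by
          congr 1
          refine integral_congr_ae (ae_of_all _ fun u => ?_)
          exact RSAux.Phi_eq π s b hb u
  · -- degenerate case: C < 0 forces all dimensions to vanish
    push_neg at hC
    have hd0 : ∀ i : ι, (π i).d = 0 := by
      intro i
      have h := hRS {i} (fun j => 1)
      simp only [Finset.sum_singleton] at h
      have hle : ((π i).d : ℝ) * traceAbs (1 : Matrix (Fin ((π i).d)) (Fin ((π i).d)) ℂ) ≤ 0 := by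
        refine h.trans ?_
        exact mul_nonpos_iff.mpr (Or.inr ⟨hC.le,
          integral_nonneg fun u => Real.iSup_nonneg fun g => norm_nonneg _⟩)
      have htr : ((π i).d : ℝ) * ((π i).d : ℝ) ≤
          ((π i).d : ℝ) * traceAbs (1 : Matrix (Fin ((π i).d)) (Fin ((π i).d)) ℂ) := by
        have h2 := norm_trace_le_traceAbs (1 : Matrix (Fin ((π i).d)) (Fin ((π i).d)) ℂ)
        rw [Matrix.trace_one] at h2
        simp only [Fintype.card_fin, Complex.norm_natCast] at h2
        exact mul_le_mul_of_nonneg_left h2 (Nat.cast_nonneg _)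
      have hzero : ((π i).d : ℝ) = 0 := by nlinarith
      exact_mod_cast hzero
    have hz : ∀ i : ι, ((π i).d : ℂ) = 0 := fun i => by rw [hd0 i]; simp
    have hL : (∑ i ∈ s, ((π i).d : ℂ) * ∫ g, Matrix.trace ((π i).mat g * b i g) ∂mG) = 0 :=
      Finset.sum_eq_zero fun i _ => by rw [hz i, zero_mul]
    have hR : ∀ u : ∀ i, Matrix.unitaryGroup (Fin ((π i).d)) ℂ,
        (⨆ t : G, ‖∑ i ∈ s, ((π i).d : ℂ) * Matrix.trace
          ((u i : Matrix (Fin ((π i).d)) (Fin ((π i).d)) ℂ) * b i t)‖) = 0 := by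
      intro u
      have hzz : ∀ t : G, (∑ i ∈ s, ((π i).d : ℂ) * Matrix.trace
          ((u i : Matrix (Fin ((π i).d)) (Fin ((π i).d)) ℂ) * b i t)) = 0 :=
        fun t => Finset.sum_eq_zero fun i _ => by rw [hz i, zero_mul]
      simp only [hzz, norm_zero]
      exact ciSup_const
    rw [hL]
    simp only [hR]
    simp

end
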